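/- Let T_1, T_2 be rooted trees with roots v_1, v_2 and branches L_1,...,L_{d_1} and R_1,...,R_{d_2} respectively, let T_0 be a tree with two distinguished vertices u, v, and let T be obtained by identifying v_1 with u and v_2 with v. Fix x>0 and d ≥ max{d_1,d_2}. Rearrange the branches L_1,...,L_{d_1},R_1,...,R_{d_2} as L'_1,...,L'_{d_1+d_2-d}, R'_1,...,R'_d so that τ(S(L'_1),x) ≥ ... ≥ τ(S(L'_{d_1+d_2-d}),x) ≥ τ(S(R'_1),x) ≥ ... ≥ τ(S(R'_d),x), and let T' be built analogously from the rearranged branches. If M_{10}(S(T_0),x) ≤ M_{01}(S(T_0),x), then M(S(T),x) ≥ M(S(T'),x). -/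

import Mathlib

/-!
Hanging a tree below the root of another acts linearly on the pair `(M₀, M₁)` of the lower tree.
Hence attaching a list `R` of branches at `v` turns `MM(S(T₀))` into
`M₀(R) • MM(S(T₀)) + M₁(R) • E`, where `M₀(R)`, `M₁(R)` belong to the star of these branches and
`E` collects the matchings of `S(T₀)` leaving `v` free. As `M₁(R) = M₀(R) σ_R` with
`σ_R = x Σ τ(R)`, and likewise at `u`,
`M(S(T)) = P (M + σ_L A + σ_R (E₁ + E₂) + σ_L σ_R E₁)`, where `P = M₀(L) M₀(R)` and `A = M₀(S(T₀))`.
The rearrangement keeps `P` and `σ_L + σ_R`; since a subdivided branch `b` has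
`τ = 1 / (1 + x τ(S(b)))`, it also makes `σ_R` maximal among all choices of at most `d` branches.
The loss is then `P (σ_R' - σ_R) (A - E₁ - E₂ + E₁ (σ_R' - σ_L)) ≥ 0`, as
`E₁ + E₂ ≤ M₀₀ + M₁₀ ≤ M₀₀ + M₀₁ = A`.
-/

/-- A rooted tree: a root node together with a list of branches (rooted subtrees). -/
inductive RTree : Type
  | node : List RTree → RTree

namespace RTree

/-- Auxiliary fold: from the list of pairs `(M0 Tᵢ x, M Tᵢ x)` of the branches,
compute `(∏ᵢ M(Tᵢ,x), Σⱼ M0(Tⱼ,x) ∏_{i≠j} M(Tᵢ,x))`. -/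
def comb : List (ℝ × ℝ) → ℝ × ℝ
  | [] => (1, 0)
  | (m0, m) :: rest =>
    let pr := comb rest
    (m * pr.1, m0 * pr.1 + m * pr.2)

/-- `MM T x = (M₀(T,x), M₁(T,x))`: generating functions of matchings of `T`
not saturating / saturating the root. -/
def MM : RTree → ℝ → ℝ × ℝ
  | .node ts, x =>
    let pr := comb (ts.attach.map fun t =>
      let q := MM t.1 x
      (q.1, q.1 + q.2))
    (pr.1, x * pr.2)
  decreasing_by have := List.sizeOf_lt_of_mem t.2; simp only [RTree.node.sizeOf_spec]; omega

/-- Generating function of matchings not saturating the root. -/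
def M0 (t : RTree) (x : ℝ) : ℝ := (MM t x).1

/-- Generating function of matchings saturating the root. -/
def M1 (t : RTree) (x : ℝ) : ℝ := (MM t x).2

/-- The matching generating function `M(T,x) = M₀(T,x) + M₁(T,x)`. -/
def M (t : RTree) (x : ℝ) : ℝ := M0 t x + M1 t x

/-- `τ(T,x) = M₀(T,x)/M(T,x)`. -/
noncomputable def tau (t : RTree) (x : ℝ) : ℝ := M0 t x / M t x

/-- The subdivision tree: insert a new vertex in every edge. -/
def subdiv : RTree → RTree
  | .node ts => .node (ts.attach.map fun t => .node [subdiv t.1])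
  decreasing_by have := List.sizeOf_lt_of_mem t.2; simp only [RTree.node.sizeOf_spec]; omega

/-- Number of vertices. -/
def order : RTree → ℕ
  | .node ts => 1 + (ts.attach.map fun t => order t.1).sum
  decreasing_by have := List.sizeOf_lt_of_mem t.2; simp only [RTree.node.sizeOf_spec]; omega

end RTree

namespace RTree

/-- Attach a list of extra branches at the root. -/
def attachB : RTree → List RTree → RTree
  | .node ts, bs => .node (ts ++ bs)

/-- Modify the `i`-th entry of a list. -/
def listModify {α : Type*} (f : α → α) : ℕ → List α → List α
  | _, [] => []
  | 0, a :: l => f a :: l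
  | n + 1, a :: l => a :: listModify f n l

/-- Apply `f` to the subtree located at a given position (list of child indices). -/
def modifyAt (f : RTree → RTree) : List ℕ → RTree → RTree
  | [], t => f t
  | i :: p, .node ts => .node (listModify (modifyAt f p) i ts)

/-- A position (list of child indices) is valid in a tree. -/
def ValidPos : List ℕ → RTree → Prop
  | [], _ => True
  | i :: p, .node ts => ∃ h : i < ts.length, ValidPos p (ts.get ⟨i, h⟩)

/-- For a tree with its root `u` and a second marked vertex `v` at position `p`,
`MM2 p T x = ((M₀₀, M₀₁), (M₁₀, M₁₁))`, the generating functions of matchings of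
`T` saturating neither `u` nor `v`, only `v`, only `u`, or both, respectively. -/
def MM2 : List ℕ → RTree → ℝ → (ℝ × ℝ) × (ℝ × ℝ)
  | [], t, x => ((M0 t x, 0), (0, M1 t x))
  | i :: p, .node ts, x =>
    if h : i < ts.length then
      let q := MM2 p (ts.get ⟨i, h⟩) x
      let os : RTree := .node (ts.eraseIdx i)
      let P0 := M0 os x
      let P1 := M1 os x
      ((P0 * (q.1.1 + q.2.1), P0 * (q.1.2 + q.2.2)),
        (x * P0 * q.1.1 + P1 * (q.1.1 + q.2.1),
          x * P0 * q.1.2 + P1 * (q.1.2 + q.2.2)))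
    else ((0, 0), (0, 0))

/-- The position in the subdivision tree corresponding to a position in the tree. -/
def subdivPos (p : List ℕ) : List ℕ := p.flatMap fun i => [i, 0]

end RTree

section

variable {α : Type*} [AddCommMonoid α] [LinearOrder α] [IsOrderedAddMonoid α]

theorem Multiset.sum_le_sum_of_forall_le_of_card_le {s t : Multiset α} (hcard : s.card ≤ t.card)
    (hst : ∀ a ∈ s, ∀ b ∈ t, a ≤ b) (ht : ∀ b ∈ t, 0 ≤ b) : s.sum ≤ t.sum := by
  rcases eq_or_ne t 0 with rfl | hne
  · simp_all
  obtain ⟨c, hc, hmin⟩ := t.exists_min_image id hne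
  calc s.sum ≤ s.card • c := Multiset.sum_le_card_nsmul s c fun a ha => hst a ha c hc
    _ ≤ t.card • c := nsmul_le_nsmul_left (ht c hc) hcard
    _ ≤ t.sum := Multiset.card_nsmul_le_sum hmin

theorem Multiset.sum_le_sum_of_le_add {s l r : Multiset α} (hs : s ≤ l + r)
    (hcard : s.card ≤ r.card) (hlr : ∀ a ∈ l, ∀ b ∈ r, a ≤ b) (hr : ∀ b ∈ r, 0 ≤ b) :
    s.sum ≤ r.sum := by
  have hsplit_s := Multiset.sub_add_inter s r
  have hsplit_r := Multiset.sub_add_inter r s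
  rw [Multiset.inter_comm] at hsplit_r
  have hcard' : (s - r).card ≤ (r - s).card := by
    have h1 := congrArg Multiset.card hsplit_s
    have h2 := congrArg Multiset.card hsplit_r
    simp only [Multiset.card_add] at h1 h2
    omega
  have hsr : s - r ≤ l := tsub_le_iff_right.mpr hs
  have hkey : (s - r).sum ≤ (r - s).sum :=
    sum_le_sum_of_forall_le_of_card_le hcard'
      (fun a ha b hb => hlr a (mem_of_le hsr ha) b (mem_of_le (Multiset.sub_le_self r s) hb))
      (fun b hb => hr b (mem_of_le (Multiset.sub_le_self r s) hb))
  calc s.sum = (s - r).sum + (s ∩ r).sum := by rw [← sum_add, hsplit_s]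
    _ ≤ (r - s).sum + (s ∩ r).sum := add_le_add_left hkey _
    _ = r.sum := by rw [← sum_add, hsplit_r]

theorem List.sum_le_sum_of_subperm_append {s l r : List α} (hs : s.Subperm (l ++ r))
    (hlen : s.length ≤ r.length) (hlr : ∀ a ∈ l, ∀ b ∈ r, a ≤ b) (hr : ∀ b ∈ r, 0 ≤ b) :
    s.sum ≤ r.sum := by
  simpa using Multiset.sum_le_sum_of_le_add (s := (s : Multiset α)) (l := l) (r := r)
    (by rw [Multiset.coe_add]; exact Multiset.coe_le.mpr hs) (by simpa using hlen)
    (by simpa using hlr) (by simpa using hr)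

end

namespace RTree

theorem comb_cons (a : ℝ × ℝ) (l : List (ℝ × ℝ)) :
    comb (a :: l) = (a.2 * (comb l).1, a.1 * (comb l).1 + a.2 * (comb l).2) := rfl

theorem comb_append (l₁ l₂ : List (ℝ × ℝ)) :
    comb (l₁ ++ l₂) =
      ((comb l₁).1 * (comb l₂).1, (comb l₁).2 * (comb l₂).1 + (comb l₁).1 * (comb l₂).2) := by
  induction l₁ with
  | nil => simp [comb]
  | cons a l ih => simp only [List.cons_append, comb_cons, ih]; ext <;> ring

theorem comb_perm {l₁ l₂ : List (ℝ × ℝ)} (h : l₁.Perm l₂) : comb l₁ = comb l₂ := by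
  induction h with
  | nil => rfl
  | cons a _ ih => rw [comb_cons, comb_cons, ih]
  | swap a b l => simp only [comb_cons]; ext <;> ring
  | trans _ _ ih₁ ih₂ => exact ih₁.trans ih₂

theorem comb_snd_eq {l : List (ℝ × ℝ)} (h : ∀ a ∈ l, a.2 ≠ 0) :
    (comb l).2 = (comb l).1 * (l.map fun a => a.1 / a.2).sum := by
  induction l with
  | nil => simp [comb]
  | cons a l ih =>
    have ha := h a List.mem_cons_self
    rw [comb_cons, List.map_cons, List.sum_cons, ih fun b hb => h b (List.mem_cons_of_mem a hb)]
    field_simp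

theorem comb_pos {l : List (ℝ × ℝ)} (h : ∀ a ∈ l, 0 ≤ a.1 ∧ 0 < a.2) :
    0 < (comb l).1 ∧ 0 ≤ (comb l).2 := by
  induction l with
  | nil => simp [comb]
  | cons a l ih =>
    obtain ⟨h1, h2⟩ := h a List.mem_cons_self
    obtain ⟨h3, h4⟩ := ih fun b hb => h b (List.mem_cons_of_mem a hb)
    rw [comb_cons]
    constructor <;> positivity

theorem M_eq_MM (t : RTree) (x : ℝ) : M t x = (MM t x).1 + (MM t x).2 := rfl

theorem MM_node (ts : List RTree) (x : ℝ) :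
    MM (node ts) x =
      ((comb (ts.map fun t => (M0 t x, M t x))).1,
        x * (comb (ts.map fun t => (M0 t x, M t x))).2) := by
  rw [MM]; simp [M0, M, M1]

theorem M0_node (ts : List RTree) (x : ℝ) :
    M0 (node ts) x = (comb (ts.map fun t => (M0 t x, M t x))).1 := by
  rw [M0, MM_node]

theorem M1_node (ts : List RTree) (x : ℝ) :
    M1 (node ts) x = x * (comb (ts.map fun t => (M0 t x, M t x))).2 := by
  rw [M1, MM_node]

theorem MM_node_perm {ts ts' : List RTree} (h : ts.Perm ts') (x : ℝ) :
    MM (node ts) x = MM (node ts') x := by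
  rw [MM_node, MM_node, comb_perm (h.map _)]

theorem M0_pos_and_M1_nonneg {x : ℝ} (hx : 0 ≤ x) : ∀ t : RTree, 0 < M0 t x ∧ 0 ≤ M1 t x
  | .node ts => by
    have hcomb := comb_pos (l := ts.map fun t => (M0 t x, M t x)) <| by
      simp only [List.mem_map]
      rintro _ ⟨t, ht, rfl⟩
      have := M0_pos_and_M1_nonneg hx t
      exact ⟨this.1.le, by simp only [M]; linarith⟩
    simp only [M0, M1, MM_node]
    exact ⟨hcomb.1, mul_nonneg hx hcomb.2⟩
  decreasing_by have := List.sizeOf_lt_of_mem ht; simp only [RTree.node.sizeOf_spec]; omega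

theorem M0_pos {x : ℝ} (hx : 0 ≤ x) (t : RTree) : 0 < M0 t x := (M0_pos_and_M1_nonneg hx t).1

theorem M1_nonneg {x : ℝ} (hx : 0 ≤ x) (t : RTree) : 0 ≤ M1 t x := (M0_pos_and_M1_nonneg hx t).2

theorem M_pos {x : ℝ} (hx : 0 ≤ x) (t : RTree) : 0 < M t x :=
  add_pos_of_pos_of_nonneg (M0_pos hx t) (M1_nonneg hx t)

theorem tau_nonneg {x : ℝ} (hx : 0 ≤ x) (t : RTree) : 0 ≤ tau t x :=
  div_nonneg (M0_pos hx t).le (M_pos hx t).le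

theorem M1_node_eq {x : ℝ} (hx : 0 ≤ x) (ts : List RTree) :
    M1 (node ts) x = M0 (node ts) x * (x * (ts.map (tau · x)).sum) := by
  rw [M1_node, M0_node, comb_snd_eq (by
    simp only [List.mem_map]; rintro _ ⟨t, -, rfl⟩; exact (M_pos hx t).ne')]
  simp only [List.map_map, Function.comp_def, tau]
  ring

theorem tau_node_singleton {x : ℝ} (hx : 0 ≤ x) (s : RTree) :
    tau (node [s]) x = (1 + x * tau s x)⁻¹ := by
  have hM := (M_pos hx s).ne'
  have hM0 : M0 (node [s]) x = M s x := by simp [M0_node, comb_cons, comb]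
  have hM1 : M1 (node [s]) x = x * M0 s x := by simp [M1_node, comb_cons, comb]
  rw [tau, M, hM0, hM1, tau]
  field_simp

theorem tau_node_singleton_anti {x : ℝ} (hx : 0 ≤ x) {s s' : RTree} (h : tau s x ≤ tau s' x) :
    tau (node [s']) x ≤ tau (node [s]) x := by
  rw [tau_node_singleton hx, tau_node_singleton hx]
  have := tau_nonneg hx s
  gcongr

theorem MM_attachB (t : RTree) (bs : List RTree) (x : ℝ) :
    MM (attachB t bs) x = M0 (node bs) x • MM t x + M1 (node bs) x • (0, M0 t x) := by
  obtain ⟨ts⟩ := t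
  simp only [attachB, M0, M1, MM_node, List.map_append, comb_append]
  ext <;> simp <;> ring

theorem listModify_eq_modify {α : Type*} (f : α → α) :
    ∀ (n : ℕ) (l : List α), listModify f n l = l.modify n f
  | _, [] => by simp [listModify]
  | 0, a :: l => rfl
  | n + 1, a :: l => by rw [listModify, listModify_eq_modify f n l, List.modify_succ_cons]

theorem map_listModify {α β : Type*} {f : α → α} {g : β → β} {m : α → β}
    (h : ∀ a, m (f a) = g (m a)) : ∀ (n : ℕ) (l : List α),
    (listModify f n l).map m = listModify g n (l.map m)
  | _, [] => by simp [listModify]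
  | 0, a :: l => by simp [listModify, h]
  | n + 1, a :: l => by simp [listModify, map_listModify h n l]

def graft (s : RTree) (x : ℝ) : ℝ × ℝ →ₗ[ℝ] ℝ × ℝ where
  toFun m := (M0 s x * (m.1 + m.2), x * M0 s x * m.1 + M1 s x * (m.1 + m.2))
  map_add' _ _ := by ext <;> simp <;> ring
  map_smul' _ _ := by ext <;> simp <;> ring

theorem graft_apply (s : RTree) (x : ℝ) (m : ℝ × ℝ) :
    graft s x m = (M0 s x * (m.1 + m.2), x * M0 s x * m.1 + M1 s x * (m.1 + m.2)) := rfl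

theorem MM_node_cons (c : RTree) (ts : List RTree) (x : ℝ) :
    MM (node (c :: ts)) x = graft (node ts) x (MM c x) := by
  rw [MM_node, graft_apply, M0_node, M1_node, List.map_cons, comb_cons, M_eq_MM]
  ext <;> simp only [M0] <;> ring

theorem MM_node_eq_graft (ts : List RTree) (x : ℝ) {i : ℕ} (h : i < ts.length) :
    MM (node ts) x = graft (node (ts.eraseIdx i)) x (MM ts[i] x) := by
  rw [MM_node_perm (List.getElem_cons_eraseIdx_perm h).symm, MM_node_cons]

/-- Carry the vector `g s` of the subtree `s` at position `p` of `t` up to the root of `t` by the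
grafts along the path. -/
def propagate (x : ℝ) (g : RTree → ℝ × ℝ) : List ℕ → RTree → ℝ × ℝ
  | [], t => g t
  | i :: p, node ts =>
    if h : i < ts.length then graft (node (ts.eraseIdx i)) x (propagate x g p ts[i]) else 0

variable {x : ℝ}

theorem propagate_cons (g : RTree → ℝ × ℝ) (p : List ℕ) {i : ℕ} {ts : List RTree}
    (h : i < ts.length) :
    propagate x g (i :: p) (node ts) = graft (node (ts.eraseIdx i)) x (propagate x g p ts[i]) := by
  rw [propagate, dif_pos h]

theorem propagate_add (g h : RTree → ℝ × ℝ) :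
    ∀ p t, propagate x (g + h) p t = propagate x g p t + propagate x h p t
  | [], _ => rfl
  | i :: p, node ts => by
    by_cases hi : i < ts.length
    · simp only [propagate_cons _ _ hi, propagate_add g h p, map_add]
    · simp [propagate, hi]

theorem propagate_smul (c : ℝ) (g : RTree → ℝ × ℝ) :
    ∀ p t, propagate x (c • g) p t = c • propagate x g p t
  | [], _ => rfl
  | i :: p, node ts => by
    by_cases hi : i < ts.length
    · simp only [propagate_cons _ _ hi, propagate_smul c g p, map_smul]
    · simp [propagate, hi]

theorem propagate_cone (hx : 0 ≤ x) {g : RTree → ℝ × ℝ}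
    (hg : ∀ s, 0 ≤ (g s).1 ∧ 0 ≤ (g s).1 + (g s).2) :
    ∀ p t, 0 ≤ (propagate x g p t).1 ∧ 0 ≤ (propagate x g p t).1 + (propagate x g p t).2
  | [], t => hg t
  | i :: p, node ts => by
    by_cases hi : i < ts.length
    · obtain ⟨h1, h2⟩ := propagate_cone hx hg p ts[i]
      have h0 := (M0_pos hx (node (ts.eraseIdx i))).le
      have h1' := M1_nonneg hx (node (ts.eraseIdx i))
      rw [propagate_cons _ _ hi, graft_apply]
      constructor <;> dsimp only <;> positivity
    · simp [propagate, hi]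

theorem MM_eq_propagate : ∀ {p : List ℕ} {t : RTree}, ValidPos p t →
    MM t x = propagate x (MM · x) p t
  | [], _, _ => rfl
  | i :: p, node ts, ⟨hi, hp⟩ => by
    rw [propagate_cons _ _ hi, ← MM_eq_propagate (t := ts[i]) hp, ← MM_node_eq_graft ts x hi]

theorem MM_modifyAt (f : RTree → RTree) : ∀ {p : List ℕ} {t : RTree}, ValidPos p t →
    MM (modifyAt f p t) x = propagate x (fun s => MM (f s) x) p t
  | [], _, _ => rfl
  | i :: p, node ts, ⟨hi, hp⟩ => by
    have hi' : i < (listModify (modifyAt f p) i ts).length := by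
      simpa [listModify_eq_modify] using hi
    rw [modifyAt, MM_node_eq_graft _ x hi', propagate_cons _ _ hi, ← MM_modifyAt f (t := ts[i]) hp]
    simp [listModify_eq_modify, List.eraseIdx_modify_of_eq]

theorem MM2_eq_propagate : ∀ (p : List ℕ) (t : RTree),
    MM2 p t x =
      (((propagate x (fun s => (M0 s x, 0)) p t).1, (propagate x (fun s => (0, M1 s x)) p t).1),
        ((propagate x (fun s => (M0 s x, 0)) p t).2, (propagate x (fun s => (0, M1 s x)) p t).2))
  | [], _ => rfl
  | i :: p, node ts => by
    by_cases hi : i < ts.length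
    · rw [MM2, dif_pos hi, propagate_cons _ _ hi, propagate_cons _ _ hi, graft_apply, graft_apply,
        List.get_eq_getElem, MM2_eq_propagate p]
    · simp [MM2, propagate, hi]

theorem M0_node_append (ts bs : List RTree) (x : ℝ) :
    M0 (node (ts ++ bs)) x = M0 (node ts) x * M0 (node bs) x := by
  simp only [M0_node, List.map_append, comb_append]

theorem M0_eq_MM2 {p : List ℕ} {t : RTree} (hp : ValidPos p t) :
    M0 t x = (MM2 p t x).1.1 + (MM2 p t x).1.2 := by
  have hsplit : (MM · x) = (fun s => (M0 s x, 0)) + fun s => (0, M1 s x) := by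
    funext s; ext <;> simp [M0, M1]
  rw [MM2_eq_propagate, M0, MM_eq_propagate hp, hsplit, propagate_add]
  rfl

/-- The matchings of `t` leaving the vertex at position `p` free, split by the state of the root,
with that vertex counted as saturated: the matchings that extend by an edge from it to a new
branch. -/
def freeMM (p : List ℕ) (t : RTree) (x : ℝ) : ℝ × ℝ := propagate x (fun s => (0, M0 s x)) p t

theorem freeMM_fst_nonneg (hx : 0 ≤ x) (p : List ℕ) (t : RTree) : 0 ≤ (freeMM p t x).1 :=
  (propagate_cone hx (fun s => by simp [(M0_pos hx s).le]) p t).1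

theorem freeMM_fst_add_snd_le (hx : 0 ≤ x) {p : List ℕ} {t : RTree} (hp : ValidPos p t)
    (hM : (MM2 p t x).2.1 ≤ (MM2 p t x).1.2) :
    (freeMM p t x).1 + (freeMM p t x).2 ≤ M0 t x := by
  have hsplit : (fun s => (M0 s x, 0)) = (fun s => (M0 s x, -M0 s x)) + fun s => (0, M0 s x) := by
    funext s; simp
  -- `(M₀ v, -M₀ v)` lies in the cone of `propagate_cone`, so `freeMM` is dominated by `(M₀₀, M₁₀)`
  have hcone := (propagate_cone hx (g := fun s => (M0 s x, -M0 s x))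
    (fun s => by simp [(M0_pos hx s).le]) p t).2
  rw [M0_eq_MM2 hp, MM2_eq_propagate]
  rw [MM2_eq_propagate] at hM
  dsimp only at hM ⊢
  rw [hsplit, propagate_add] at hM ⊢
  simp only [Prod.fst_add, Prod.snd_add] at hM ⊢
  unfold freeMM
  linarith

theorem M_attachB_modifyAt {p : List ℕ} {t : RTree} (hp : ValidPos p t) (Ls Rs : List RTree) :
    M (attachB (modifyAt (fun s => attachB s Rs) p t) Ls) x =
      M0 (node Ls) x * M0 (node Rs) x * M t x + M1 (node Ls) x * M0 (node Rs) x * M0 t x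
      + M0 (node Ls) x * M1 (node Rs) x * ((freeMM p t x).1 + (freeMM p t x).2)
      + M1 (node Ls) x * M1 (node Rs) x * (freeMM p t x).1 := by
  have hv : MM (modifyAt (fun s => attachB s Rs) p t) x =
      M0 (node Rs) x • MM t x + M1 (node Rs) x • freeMM p t x := by
    rw [MM_modifyAt _ hp, MM_eq_propagate hp, freeMM, ← propagate_smul, ← propagate_smul,
      ← propagate_add]
    simp only [MM_attachB]
    rfl
  simp only [M_eq_MM, M0, M1, MM_attachB, hv, Prod.fst_add, Prod.snd_add, Prod.smul_fst,
    Prod.smul_snd, smul_eq_mul]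
  ring

theorem M_exchange_le (hx : 0 < x) {p : List ℕ} {t : RTree} (hp : ValidPos p t)
    (hM : (MM2 p t x).2.1 ≤ (MM2 p t x).1.2) {Ls Rs Ls' Rs' : List RTree}
    (hperm : (Ls' ++ Rs').Perm (Ls ++ Rs))
    (hR : (Rs.map (tau · x)).sum ≤ (Rs'.map (tau · x)).sum)
    (hL : (Ls.map (tau · x)).sum ≤ (Rs'.map (tau · x)).sum) :
    M (attachB (modifyAt (fun s => attachB s Rs') p t) Ls') x ≤
      M (attachB (modifyAt (fun s => attachB s Rs) p t) Ls) x := by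
  have hE₁ := freeMM_fst_nonneg hx.le p t
  have hE := freeMM_fst_add_snd_le hx.le hp hM
  have hprod : M0 (node Ls') x * M0 (node Rs') x = M0 (node Ls) x * M0 (node Rs) x := by
    rw [← M0_node_append, ← M0_node_append, M0, M0, MM_node_perm hperm]
  set τL := (Ls.map (tau · x)).sum
  set τR := (Rs.map (tau · x)).sum
  set τR' := (Rs'.map (tau · x)).sum
  have hτL' : (Ls'.map (tau · x)).sum = τL + τR - τR' := by
    have := (hperm.map (tau · x)).sum_eq
    simp only [List.map_append, List.sum_append] at this
    linarith
  set E := freeMM p t x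
  have hP := mul_pos (M0_pos hx.le (node Ls)) (M0_pos hx.le (node Rs))
  have key : 0 ≤ M0 (node Ls) x * M0 (node Rs) x * (x * (τR' - τR)) *
      (M0 t x - (E.1 + E.2) + x * E.1 * (τR' - τL)) := by
    have := mul_nonneg (mul_nonneg hx.le hE₁) (sub_nonneg.2 hL)
    exact mul_nonneg (mul_nonneg hP.le (mul_nonneg hx.le (by linarith))) (by linarith)
  rw [M_attachB_modifyAt hp, M_attachB_modifyAt hp]
  simp only [M1_node_eq hx.le, hτL']
  linear_combination key + (M t x + x * (τL + τR - τR') * M0 t x + x * τR' * (E.1 + E.2)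
    + x ^ 2 * (τL + τR - τR') * τR' * E.1) * hprod

/-- A branch `b` as it hangs in a subdivided tree: `S(b)` below the subdivision vertex. -/
def subdivBranch (b : RTree) : RTree := node [subdiv b]

theorem subdivPos_cons (i : ℕ) (p : List ℕ) : subdivPos (i :: p) = i :: 0 :: subdivPos p := by
  simp [subdivPos]

theorem subdiv_node (ts : List RTree) : subdiv (node ts) = node (ts.map subdivBranch) := by
  rw [subdiv]; simp [subdivBranch]

theorem subdiv_attachB (t : RTree) (bs : List RTree) :
    subdiv (attachB t bs) = attachB (subdiv t) (bs.map subdivBranch) := by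
  obtain ⟨ts⟩ := t
  simp only [attachB, subdiv_node, List.map_append]

theorem subdiv_modifyAt {f f' : RTree → RTree} (hf : ∀ s, subdiv (f s) = f' (subdiv s)) :
    ∀ (p : List ℕ) (t : RTree), subdiv (modifyAt f p t) = modifyAt f' (subdivPos p) (subdiv t)
  | [], t => hf t
  | i :: p, node ts => by
    rw [subdivPos_cons, modifyAt, subdiv_node, subdiv_node, modifyAt, map_listModify]
    intro b
    simp [subdivBranch, modifyAt, listModify, subdiv_modifyAt hf p b]

theorem validPos_subdivPos : ∀ {p : List ℕ} {t : RTree}, ValidPos p t →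
    ValidPos (subdivPos p) (subdiv t)
  | [], _, _ => trivial
  | i :: p, node ts, ⟨hi, hp⟩ => by
    rw [subdivPos_cons, subdiv_node]
    refine ⟨by simpa using hi, ?_⟩
    simp only [List.get_eq_getElem, List.getElem_map, subdivBranch]
    exact ⟨by simp, validPos_subdivPos hp⟩

theorem subdiv_attachB_modifyAt (T₀ : RTree) (p : List ℕ) (Ls Rs : List RTree) :
    subdiv (attachB (modifyAt (fun s => attachB s Rs) p T₀) Ls) =
      attachB (modifyAt (fun s => attachB s (Rs.map subdivBranch)) (subdivPos p) (subdiv T₀))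
        (Ls.map subdivBranch) := by
  rw [subdiv_attachB, subdiv_modifyAt (f' := fun s => attachB s (Rs.map subdivBranch))
    fun s => subdiv_attachB s Rs]

end RTree

open RTree in
/-- `T₀` is rooted at `u` and `v` is its vertex at position `pv`; `T` carries the branches `Ls`
at `u` and `Rs` at `v`, and `T'` the branches `Ls'` at `u` and `Rs'` at `v`. -/
theorem exchange_theorem_general (x : ℝ) (hx : 0 < x) (d : ℕ)
    (T₀ : RTree) (pv : List ℕ) (hpv : ValidPos pv T₀)
    (Ls Rs Ls' Rs' : List RTree)
    (hd1 : Ls.length ≤ d) (hd2 : Rs.length ≤ d)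
    (hperm : (Ls' ++ Rs').Perm (Ls ++ Rs))
    (hlen : Rs'.length = min d (Ls.length + Rs.length))
    (hsorted : ((Ls' ++ Rs').map fun t => tau (subdiv t) x).Pairwise (· ≥ ·))
    (hM : (MM2 (subdivPos pv) (subdiv T₀) x).2.1 ≤
      (MM2 (subdivPos pv) (subdiv T₀) x).1.2) :
    M (subdiv (attachB (modifyAt (fun s => attachB s Rs') pv T₀) Ls')) x ≤
      M (subdiv (attachB (modifyAt (fun s => attachB s Rs) pv T₀) Ls)) x := by
  set w : RTree → ℝ := fun b => tau (subdivBranch b) x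
  have hsep : ∀ a ∈ Ls'.map w, ∀ b ∈ Rs'.map w, a ≤ b := by
    simp only [List.mem_map]
    rintro _ ⟨a, ha, rfl⟩ _ ⟨b, hb, rfl⟩
    rw [List.map_append, List.pairwise_append] at hsorted
    exact tau_node_singleton_anti hx.le
      (hsorted.2.2 _ (List.mem_map_of_mem ha) _ (List.mem_map_of_mem hb))
  have hbound : ∀ s : List RTree, s.Sublist (Ls ++ Rs) → s.length ≤ d →
      (s.map w).sum ≤ (Rs'.map w).sum := fun s hs hsd =>
    List.sum_le_sum_of_subperm_append
      ((hs.map w).subperm.trans (by simpa using (hperm.map w).symm.subperm))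
      (by simpa [hlen, hsd] using hs.length_le) hsep
      (by simp only [List.mem_map]; rintro _ ⟨b, -, rfl⟩; exact tau_nonneg hx.le _)
  rw [subdiv_attachB_modifyAt, subdiv_attachB_modifyAt]
  refine M_exchange_le hx (validPos_subdivPos hpv) hM (by simpa using hperm.map subdivBranch) ?_ ?_
  · simpa [w, Function.comp_def] using hbound Rs (List.sublist_append_right Ls Rs) hd2
  · simpa [w, Function.comp_def] using hbound Ls (List.sublist_append_left Ls Rs) hd1

open RTree in
/-- Theorem 2.5 (the exchange theorem).  `T₀` is a tree rooted at `u` with a second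
marked vertex `v` at position `pv`; `T` is obtained by attaching the branches
`Ls` at `u` and `Rs` at `v`, and `T'` by attaching the rearranged branches
`Ls'` at `u` and `Rs'` at `v`, where `Ls' ++ Rs'` is a permutation of
`Ls ++ Rs` sorted so that the values `τ(S(·),x)` are non-increasing and
`Rs'` consists of the `min d (|Ls|+|Rs|)` branches with smallest `τ(S(·),x)`.
If `M₁₀(S(T₀),x) ≤ M₀₁(S(T₀),x)` then `M(S(T),x) ≥ M(S(T'),x)`. -/
theorem exchange_theorem (x : ℝ) (hx : 0 < x) (d : ℕ)
    (T₀ : RTree) (pv : List ℕ) (hpv : ValidPos pv T₀) (hne : pv ≠ [])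
    (Ls Rs Ls' Rs' : List RTree)
    (hd1 : Ls.length ≤ d) (hd2 : Rs.length ≤ d)
    (hperm : (Ls' ++ Rs').Perm (Ls ++ Rs))
    (hlen : Rs'.length = min d (Ls.length + Rs.length))
    (hsorted : ((Ls' ++ Rs').map fun t => tau (subdiv t) x).Pairwise (· ≥ ·))
    (hM : (MM2 (subdivPos pv) (subdiv T₀) x).2.1 ≤
      (MM2 (subdivPos pv) (subdiv T₀) x).1.2) :
    M (subdiv (attachB (modifyAt (fun s => attachB s Rs') pv T₀) Ls')) x ≤
      M (subdiv (attachB (modifyAt (fun s => attachB s Rs) pv T₀) Ls)) x :=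
  exchange_theorem_general x hx d T₀ pv hpv Ls Rs Ls' Rs' hd1 hd2 hperm hlen hsorted hM
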